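/- arXiv:1806.07422 — 2 statements merged into one kernel-verified Lean document; each statement's English description precedes it below -/
import Mathlib

section
/- Conditional exchangeability given X implies conditional exchangeability given the propensity score: if (Y(a'))_{a'} ⊥ A | X, then for each fixed a ∈ {0,1}^n, the random variable Y(a) is conditionally independent of the event {A = a} given the scalar propensity score e(X) := P(A = a | X). In particular E[Y(a) | A = a, e(X)] = E[Y(a) | e(X)] a.s. on {P(A=a | e(X)) > 0}. -/
open MeasureTheory Filter

/-! The tower property `E[E[· | X] | e(X)] = E[· | e(X)]` holds although `e(X)` is only a.e.
equal to a `σ(X)`-measurable function, since preimages under the two are a.e. equal. Conditioning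
on `X` first, exchangeability turns `1{A=a} Y(a)` into `e(X) · E[Y(a) | X]`; the factor `e(X)` is
`σ(e(X))`-measurable and pulls out, leaving `e(X) · E[Y(a) | e(X)]`. The same tower argument
shows `P(A = a | e(X)) = e(X)`. -/

theorem condExp_condExp_comap_of_ae_eq {Ω β : Type*} {m₁ m₀ : MeasurableSpace Ω}
    [MeasurableSpace β] {μ : Measure Ω} [IsFiniteMeasure μ] {e g : Ω → β}
    (hm₁ : m₁ ≤ m₀) (he : Measurable e) (hg : Measurable[m₁] g) (heg : e =ᵐ[μ] g)
    (h : Ω → ℝ) :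
    μ[μ[h | m₁] | MeasurableSpace.comap e inferInstance]
      =ᵐ[μ] μ[h | MeasurableSpace.comap e inferInstance] := by
  by_cases hh : Integrable h μ
  swap
  · simp [condExp_of_not_integrable hh]
  refine (ae_eq_condExp_of_forall_setIntegral_eq he.comap_le integrable_condExp
    (fun s _ _ => integrable_condExp.integrableOn) ?_
    stronglyMeasurable_condExp.aestronglyMeasurable).symm
  rintro - ⟨t, ht, rfl⟩ -
  have hpre : e ⁻¹' t =ᵐ[μ] g ⁻¹' t := heg.preimage t
  calc ∫ ω in e ⁻¹' t, μ[h | MeasurableSpace.comap e inferInstance] ω ∂μ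
      = ∫ ω in e ⁻¹' t, h ω ∂μ := setIntegral_condExp he.comap_le hh ⟨t, ht, rfl⟩
    _ = ∫ ω in g ⁻¹' t, h ω ∂μ := setIntegral_congr_set hpre
    _ = ∫ ω in g ⁻¹' t, μ[h | m₁] ω ∂μ := (setIntegral_condExp hm₁ hh (hg ht)).symm
    _ = ∫ ω in e ⁻¹' t, μ[h | m₁] ω ∂μ := setIntegral_congr_set hpre.symm

theorem propensity_score_balancing_general
    {Ω 𝒳 : Type*} [MeasurableSpace Ω] [MeasurableSpace 𝒳]
    (μ : Measure Ω) [IsProbabilityMeasure μ]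
    (n : ℕ) (A : Ω → (Fin n → Fin 2))
    (X : Ω → 𝒳) (hX : Measurable X)
    (Y : (Fin n → Fin 2) → Ω → ℝ)
    -- propensity score `fA a' = P(A = a' | X)`
    (fA : (Fin n → Fin 2) → Ω → ℝ)
    (hfA : ∀ a', fA a'
      =ᵐ[μ] μ[(A ⁻¹' {a'}).indicator (fun _ => (1:ℝ)) | MeasurableSpace.comap X inferInstance])
    (hfA_meas : ∀ a', Measurable (fA a'))
    -- conditional exchangeability: (Y(a''))_{a''} ⫫ A | X
    (hexch : ∀ a' a'',
      μ[fun ω => (A ⁻¹' {a'}).indicator (fun _ => (1:ℝ)) ω * Y a'' ω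
          | MeasurableSpace.comap X inferInstance]
        =ᵐ[μ] fun ω => fA a' ω *
          (μ[Y a'' | MeasurableSpace.comap X inferInstance]) ω)
    (a : Fin n → Fin 2) :
    -- conditional independence of `Y(a)` and `{A = a}` given `e(X) = fA a`
    μ[fun ω => (A ⁻¹' {a}).indicator (fun _ => (1:ℝ)) ω * Y a ω
        | MeasurableSpace.comap (fA a) inferInstance]
      =ᵐ[μ] fun ω =>
        (μ[(A ⁻¹' {a}).indicator (fun _ => (1:ℝ))
            | MeasurableSpace.comap (fA a) inferInstance]) ω *
        (μ[Y a | MeasurableSpace.comap (fA a) inferInstance]) ω := by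
  set mX := MeasurableSpace.comap X inferInstance
  set me := MeasurableSpace.comap (fA a) inferInstance
  set I : Ω → ℝ := (A ⁻¹' {a}).indicator fun _ => 1
  have he_sm : StronglyMeasurable[me] (fA a) :=
    (comap_measurable (fA a)).stronglyMeasurable
  have tower (h : Ω → ℝ) : μ[μ[h | mX] | me] =ᵐ[μ] μ[h | me] :=
    condExp_condExp_comap_of_ae_eq hX.comap_le (hfA_meas a)
      stronglyMeasurable_condExp.measurable (hfA a) h
  have propensity : μ[I | me] =ᵐ[μ] fA a :=
    calc μ[I | me] =ᵐ[μ] μ[μ[I | mX] | me] := (tower I).symm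
      _ =ᵐ[μ] μ[fA a | me] := condExp_congr_ae (hfA a).symm
      _ = fA a := condExp_of_stronglyMeasurable (hfA_meas a).comap_le he_sm
          (integrable_condExp.congr (hfA a).symm)
  calc μ[fun ω => I ω * Y a ω | me]
      =ᵐ[μ] μ[μ[fun ω => I ω * Y a ω | mX] | me] := (tower _).symm
    _ =ᵐ[μ] μ[fun ω => fA a ω * μ[Y a | mX] ω | me] := condExp_congr_ae (hexch a a)
    _ =ᵐ[μ] fun ω => fA a ω * μ[μ[Y a | mX] | me] ω :=
        condExp_mul_of_stronglyMeasurable_left he_sm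
          (integrable_condExp.congr (hexch a a)) integrable_condExp
    _ =ᵐ[μ] fun ω => μ[I | me] ω * μ[Y a | me] ω := propensity.symm.mul (tower (Y a))

/-- Conditional exchangeability given `X` implies conditional exchangeability
given the scalar propensity score `e(X) = P(A = a | X)`: for fixed `a`, the
potential outcome `Y(a)` and the event `{A = a}` factor conditionally on
`σ(e(X))`, i.e. `E[1{A=a} Y(a) | e(X)] = P(A=a | e(X)) · E[Y(a) | e(X)]` a.s.
(the interference analogue of the Rosenbaum–Rubin balancing property). -/
theorem propensity_score_balancing
    {Ω 𝒳 : Type*} [MeasurableSpace Ω] [MeasurableSpace 𝒳]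
    (μ : Measure Ω) [IsProbabilityMeasure μ]
    (n : ℕ) (A : Ω → (Fin n → Fin 2)) (hA : Measurable A)
    (X : Ω → 𝒳) (hX : Measurable X)
    (Y : (Fin n → Fin 2) → Ω → ℝ)
    (hYmeas : ∀ a', Measurable (Y a'))
    (hYint : ∀ a', Integrable (Y a') μ)
    -- propensity score `fA a' = P(A = a' | X)`
    (fA : (Fin n → Fin 2) → Ω → ℝ)
    (hfA : ∀ a', fA a'
      =ᵐ[μ] μ[(A ⁻¹' {a'}).indicator (fun _ => (1:ℝ)) | MeasurableSpace.comap X inferInstance])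
    (hfA_meas : ∀ a', Measurable (fA a'))
    (hpos : ∀ a', ∀ᵐ ω ∂μ, 0 < fA a' ω)
    -- conditional exchangeability: (Y(a''))_{a''} ⫫ A | X
    (hexch : ∀ a' a'',
      μ[fun ω => (A ⁻¹' {a'}).indicator (fun _ => (1:ℝ)) ω * Y a'' ω
          | MeasurableSpace.comap X inferInstance]
        =ᵐ[μ] fun ω => fA a' ω *
          (μ[Y a'' | MeasurableSpace.comap X inferInstance]) ω)
    (a : Fin n → Fin 2) :
    -- conditional independence of `Y(a)` and `{A = a}` given `e(X) = fA a`
    μ[fun ω => (A ⁻¹' {a}).indicator (fun _ => (1:ℝ)) ω * Y a ω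
        | MeasurableSpace.comap (fA a) inferInstance]
      =ᵐ[μ] fun ω =>
        (μ[(A ⁻¹' {a}).indicator (fun _ => (1:ℝ))
            | MeasurableSpace.comap (fA a) inferInstance]) ω *
        (μ[Y a | MeasurableSpace.comap (fA a) inferInstance]) ω :=
  propensity_score_balancing_general μ n A X hX Y fA hfA hfA_meas hexch a
end

section
/- Propensity-score-based identification of μ_{aα}: under conditional exchangeability and positivity, μ_{aα} = ∑_{a₋} E[ E[ Y | A_j = a, A₋ⱼ = a₋, f((a,a₋)|X) ] ] π(a₋;α), i.e., it suffices to condition on the scalar propensity f((a,a₋)|X) rather than the full covariate X. -/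
open MeasureTheory Filter

/-- `π(a;α) = ∏_j α^{a_j}(1-α)^{1-a_j}`. -/
def bernPi (α : ℝ) {n : ℕ} (a : Fin n → Fin 2) : ℝ :=
  ∏ j, α ^ (a j : ℕ) * (1 - α) ^ (1 - (a j : ℕ))

/-!
The propensity score `f = P(A = a' | X)` is a balancing score. Since `f` is a version of an
`X`-measurable function, `σ(f)` is contained in `σ(X)` up to null sets, and the tower property
survives this. Conditioning first on `X` and then on `f` gives `P(A = a' | f) = f` and, by
exchangeability `E[1{A = a'} Y | X] = f E[Y | X]`, also `E[1{A = a'} Y | f] = f E[Y | f]`.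
Positivity lets us divide by `f`, so the ratio is `E[Y | f]`, whose expectation is `E[Y]`.
-/

namespace MeasureTheory

variable {Ω β : Type*} {m₁ m₂ m₀ : MeasurableSpace Ω} {μ : Measure Ω}

lemma exists_measurableSet_ae_eq_of_measurableSet_comap {mβ : MeasurableSpace β} {f g : Ω → β}
    (hg : Measurable[m₂] g) (hfg : f =ᵐ[μ] g) :
    ∀ s, MeasurableSet[mβ.comap f] s → ∃ t, MeasurableSet[m₂] t ∧ s =ᵐ[μ] t := by
  rintro _ ⟨B, hB, rfl⟩
  exact ⟨g ⁻¹' B, hg hB, hfg.fun_comp (· ∈ B)⟩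

lemma condExp_condExp_of_ae_le (hm₁ : m₁ ≤ m₀) (hm₂ : m₂ ≤ m₀)
    [SigmaFinite (μ.trim hm₁)] [SigmaFinite (μ.trim hm₂)]
    (h₁₂ : ∀ s, MeasurableSet[m₁] s → ∃ t, MeasurableSet[m₂] t ∧ s =ᵐ[μ] t)
    {h : Ω → ℝ} (hh : Integrable h μ) :
    μ[μ[h | m₂] | m₁] =ᵐ[μ] μ[h | m₁] := by
  refine (ae_eq_condExp_of_forall_setIntegral_eq hm₁ integrable_condExp
    (fun _ _ _ => integrable_condExp.integrableOn) (fun s hs _ => ?_)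
    stronglyMeasurable_condExp.aestronglyMeasurable).symm
  obtain ⟨t, ht, hst⟩ := h₁₂ s hs
  rw [setIntegral_condExp hm₁ hh hs, setIntegral_congr_set hst, setIntegral_congr_set hst,
    setIntegral_condExp hm₂ hh ht]

variable [IsFiniteMeasure μ]

section Propensity

variable {D : Set Ω} {f : Ω → ℝ}

lemma condExp_comap_propensity_indicator (hm₂ : m₂ ≤ m₀) (hf : Measurable f)
    (hfD : f =ᵐ[μ] μ[D.indicator 1 | m₂]) (hD : MeasurableSet D) :
    μ[D.indicator 1 | MeasurableSpace.comap f inferInstance] =ᵐ[μ] f := by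
  have hf' : StronglyMeasurable[MeasurableSpace.comap f inferInstance] f :=
    (comap_measurable f).stronglyMeasurable
  have tower := condExp_condExp_of_ae_le hf.comap_le hm₂
    (exists_measurableSet_ae_eq_of_measurableSet_comap stronglyMeasurable_condExp.measurable hfD)
    ((integrable_const (1 : ℝ)).indicator hD)
  calc μ[D.indicator 1 | MeasurableSpace.comap f inferInstance]
      =ᵐ[μ] μ[μ[D.indicator 1 | m₂] | MeasurableSpace.comap f inferInstance] := tower.symm
    _ =ᵐ[μ] μ[f | MeasurableSpace.comap f inferInstance] := condExp_congr_ae hfD.symm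
    _ = f := condExp_of_stronglyMeasurable hf.comap_le hf' (integrable_condExp.congr hfD.symm)

lemma condExp_comap_propensity_indicator_mul (hm₂ : m₂ ≤ m₀) (hf : Measurable f)
    (hfD : f =ᵐ[μ] μ[D.indicator 1 | m₂]) (hD : MeasurableSet D)
    {Y : Ω → ℝ} (hY : Integrable Y μ)
    (hexch : μ[fun ω => D.indicator 1 ω * Y ω | m₂] =ᵐ[μ] fun ω => f ω * μ[Y | m₂] ω) :
    μ[fun ω => D.indicator 1 ω * Y ω | MeasurableSpace.comap f inferInstance]
      =ᵐ[μ] fun ω => f ω * μ[Y | MeasurableSpace.comap f inferInstance] ω := by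
  have hf' : StronglyMeasurable[MeasurableSpace.comap f inferInstance] f :=
    (comap_measurable f).stronglyMeasurable
  have h₁₂ :=
    exists_measurableSet_ae_eq_of_measurableSet_comap stronglyMeasurable_condExp.measurable hfD
  have hDY : Integrable (fun ω => D.indicator 1 ω * Y ω) μ := by
    refine (hY.indicator hD).congr (.of_forall fun ω => ?_)
    by_cases hω : ω ∈ D <;> simp [hω]
  calc μ[fun ω => D.indicator 1 ω * Y ω | MeasurableSpace.comap f inferInstance]
      =ᵐ[μ] μ[μ[fun ω => D.indicator 1 ω * Y ω | m₂] | MeasurableSpace.comap f inferInstance] :=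
        (condExp_condExp_of_ae_le hf.comap_le hm₂ h₁₂ hDY).symm
    _ =ᵐ[μ] μ[f * μ[Y | m₂] | MeasurableSpace.comap f inferInstance] := condExp_congr_ae hexch
    _ =ᵐ[μ] f * μ[μ[Y | m₂] | MeasurableSpace.comap f inferInstance] :=
        condExp_mul_of_stronglyMeasurable_left hf' (integrable_condExp.congr hexch)
          integrable_condExp
    _ =ᵐ[μ] f * μ[Y | MeasurableSpace.comap f inferInstance] :=
        (condExp_condExp_of_ae_le hf.comap_le hm₂ h₁₂ hY).mul_left

lemma integral_condExp_comap_propensity_div (hm₂ : m₂ ≤ m₀) (hf : Measurable f)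
    (hfD : f =ᵐ[μ] μ[D.indicator 1 | m₂]) (hpos : ∀ᵐ ω ∂μ, 0 < f ω) (hD : MeasurableSet D)
    {Y : Ω → ℝ} (hY : Integrable Y μ)
    (hexch : μ[fun ω => D.indicator 1 ω * Y ω | m₂] =ᵐ[μ] fun ω => f ω * μ[Y | m₂] ω) :
    ∫ ω, μ[fun ω => D.indicator 1 ω * Y ω | MeasurableSpace.comap f inferInstance] ω
        / μ[D.indicator 1 | MeasurableSpace.comap f inferInstance] ω ∂μ = ∫ ω, Y ω ∂μ := by
  have hratio : (fun ω =>
      μ[fun ω => D.indicator 1 ω * Y ω | MeasurableSpace.comap f inferInstance] ω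
        / μ[D.indicator 1 | MeasurableSpace.comap f inferInstance] ω)
      =ᵐ[μ] μ[Y | MeasurableSpace.comap f inferInstance] := by
    filter_upwards [condExp_comap_propensity_indicator_mul hm₂ hf hfD hD hY hexch,
      condExp_comap_propensity_indicator hm₂ hf hfD hD, hpos] with ω hnum hden hω
    rw [hnum, hden, mul_div_cancel_left₀ _ hω.ne']
  rw [integral_congr_ae hratio, integral_condExp hf.comap_le]

end Propensity

end MeasureTheory

theorem propensity_score_identification_general
    {Ω 𝒳 : Type*} [MeasurableSpace Ω] [MeasurableSpace 𝒳]
    (μ : Measure Ω) [IsProbabilityMeasure μ]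
    (n : ℕ) (j : Fin (n + 1))
    (A : Ω → (Fin (n + 1) → Fin 2)) (hA : Measurable A)
    (X : Ω → 𝒳) (hX : Measurable X)
    (Y : (Fin (n + 1) → Fin 2) → Ω → ℝ)
    (hYint : ∀ a', Integrable (Y a') μ)
    (fA : (Fin (n + 1) → Fin 2) → Ω → ℝ)
    (hfA : ∀ a', fA a'
      =ᵐ[μ] μ[(A ⁻¹' {a'}).indicator (fun _ => (1:ℝ)) | MeasurableSpace.comap X inferInstance])
    (hfA_meas : ∀ a', Measurable (fA a'))
    (hpos : ∀ a', ∀ᵐ ω ∂μ, 0 < fA a' ω)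
    (hexch : ∀ a' a'',
      μ[fun ω => (A ⁻¹' {a'}).indicator (fun _ => (1:ℝ)) ω * Y a'' ω
          | MeasurableSpace.comap X inferInstance]
        =ᵐ[μ] fun ω => fA a' ω *
          (μ[Y a'' | MeasurableSpace.comap X inferInstance]) ω)
    (a : Fin 2) (α : ℝ) :
    ∑ am : Fin n → Fin 2, (∫ ω, Y (j.insertNth a am) ω ∂μ) * bernPi α am
      = ∑ am : Fin n → Fin 2,
          (∫ ω,
            (μ[fun ω' => (A ⁻¹' {j.insertNth a am}).indicator (fun _ => (1:ℝ)) ω'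
                  * Y (A ω') ω'
                | MeasurableSpace.comap (fA (j.insertNth a am)) inferInstance]) ω
            / (μ[(A ⁻¹' {j.insertNth a am}).indicator (fun _ => (1:ℝ))
                | MeasurableSpace.comap (fA (j.insertNth a am)) inferInstance]) ω ∂μ)
          * bernPi α am := by
  refine Finset.sum_congr rfl fun am _ => congrArg (· * bernPi α am) ?_
  set a' : Fin (n + 1) → Fin 2 := j.insertNth a am
  have hobserved : (fun ω => (A ⁻¹' {a'}).indicator (fun _ => (1:ℝ)) ω * Y (A ω) ω)
      = fun ω => (A ⁻¹' {a'}).indicator (fun _ => (1:ℝ)) ω * Y a' ω := by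
    funext ω
    by_cases hω : A ω = a' <;> simp [hω]
  rw [hobserved]
  exact (integral_condExp_comap_propensity_div hX.comap_le (hfA_meas a') (hfA a') (hpos a')
    (hA (measurableSet_singleton a')) (hYint a') (hexch a' a')).symm

/-- Propensity-score-based identification of `μ_{aα}`: under conditional
exchangeability and positivity,
`μ_{aα} = ∑_{am} E[ E[ Y | A_j = a, A₋ⱼ = am, f((a,am)|X) ] ] π(am;α)`,
where the inner conditional expectation given the event `{A = (a,am)}` and the
scalar propensity `f((a,am)|X)` is expressed as the ratio
`E[1{A=(a,am)} Y | σ(f((a,am)|X))] / P(A=(a,am) | σ(f((a,am)|X)))`. -/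
theorem propensity_score_identification
    {Ω 𝒳 : Type*} [MeasurableSpace Ω] [MeasurableSpace 𝒳]
    (μ : Measure Ω) [IsProbabilityMeasure μ]
    (n : ℕ) (j : Fin (n + 1))
    (A : Ω → (Fin (n + 1) → Fin 2)) (hA : Measurable A)
    (X : Ω → 𝒳) (hX : Measurable X)
    (Y : (Fin (n + 1) → Fin 2) → Ω → ℝ)
    (hYmeas : ∀ a', Measurable (Y a'))
    (hYint : ∀ a', Integrable (Y a') μ)
    (fA : (Fin (n + 1) → Fin 2) → Ω → ℝ)
    (hfA : ∀ a', fA a'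
      =ᵐ[μ] μ[(A ⁻¹' {a'}).indicator (fun _ => (1:ℝ)) | MeasurableSpace.comap X inferInstance])
    (hfA_meas : ∀ a', Measurable (fA a'))
    (hpos : ∀ a', ∀ᵐ ω ∂μ, 0 < fA a' ω)
    (hexch : ∀ a' a'',
      μ[fun ω => (A ⁻¹' {a'}).indicator (fun _ => (1:ℝ)) ω * Y a'' ω
          | MeasurableSpace.comap X inferInstance]
        =ᵐ[μ] fun ω => fA a' ω *
          (μ[Y a'' | MeasurableSpace.comap X inferInstance]) ω)
    (a : Fin 2) (α : ℝ) (hα : α ∈ Set.Ioo (0:ℝ) 1) :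
    ∑ am : Fin n → Fin 2, (∫ ω, Y (j.insertNth a am) ω ∂μ) * bernPi α am
      = ∑ am : Fin n → Fin 2,
          (∫ ω,
            (μ[fun ω' => (A ⁻¹' {j.insertNth a am}).indicator (fun _ => (1:ℝ)) ω'
                  * Y (A ω') ω'
                | MeasurableSpace.comap (fA (j.insertNth a am)) inferInstance]) ω
            / (μ[(A ⁻¹' {j.insertNth a am}).indicator (fun _ => (1:ℝ))
                | MeasurableSpace.comap (fA (j.insertNth a am)) inferInstance]) ω ∂μ)
          * bernPi α am :=
  propensity_score_identification_general μ n j A hA X hX Y hYint fA hfA hfA_meas hpos hexch a α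
end
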